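/- arXiv:1807.10514 — 3 statements merged into one kernel-verified Lean document; each statement's English description precedes it below -/
import Mathlib

section
/- For every u ∈ ℝ^V the subdifferential of the graph total variation satisfies ∂J(u) = div(B_{1,u}), where B_{1,u} is the set of edge functions H ∈ ℝ^E such that for every edge (v,w) ∈ E: H((v,w)) = 1 if u(v) < u(w), H((v,w)) = −1 if u(v) > u(w), and H((v,w)) ∈ [−1,1] if u(v) = u(w). -/
open Finset MeasureTheory

noncomputable section

/-- The graph total variation `J(u) = ∑_{(v,w) ∈ E} |u(w) - u(v)|`. -/
def tvJ {V : Type*} (E : Finset (V × V)) (u : V → ℝ) : ℝ :=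
  ∑ e ∈ E, |u e.2 - u e.1|

/-- The subdifferential of the graph total variation at `u`. -/
def subdiffJ {V : Type*} [Fintype V] (E : Finset (V × V)) (u : V → ℝ) : Set (V → ℝ) :=
  {us | ∀ h : V → ℝ, (∑ v, (h v - u v) * us v) + tvJ E u ≤ tvJ E h}

/-- The divergence of an edge function `H`:
`(div H)(v) = ∑_{(w,v) ∈ E} H((w,v)) - ∑_{(v,w) ∈ E} H((v,w))`. -/
def gdiv {V : Type*} [DecidableEq V] (E : Finset (V × V)) (H : V × V → ℝ) : V → ℝ :=
  fun v => (∑ e ∈ E, if e.2 = v then H e else 0) - (∑ e ∈ E, if e.1 = v then H e else 0)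

/-- The ℓ² norm on `ℝ^V`. -/
def norm2 {V : Type*} [Fintype V] (u : V → ℝ) : ℝ :=
  Real.sqrt (∑ v, (u v) ^ 2)

/-- `u` minimizes `w ↦ ½‖f - w‖₂² + α J(w)` over `ℝ^V`. -/
def IsROFMinimizer {V : Type*} [Fintype V] (E : Finset (V × V)) (f : V → ℝ) (α : ℝ)
    (u : V → ℝ) : Prop :=
  ∀ w : V → ℝ,
    (1 / 2) * (∑ v, (f v - u v) ^ 2) + α * tvJ E u ≤
      (1 / 2) * (∑ v, (f v - w v) ^ 2) + α * tvJ E w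

/-- `u : [0,∞) → ℝ^V` is a TV flow solution with datum `f`: it is Lipschitz on `[0,∞)`,
`u(0) = f`, and `-u'(t) ∈ ∂J(u(t))` for almost every `t > 0`. -/
def IsTVFlowSolution {V : Type*} [Fintype V] (E : Finset (V × V)) (f : V → ℝ)
    (u : ℝ → V → ℝ) : Prop :=
  u 0 = f ∧ (∃ L : NNReal, LipschitzOnWith L u (Set.Ici 0)) ∧
    ∃ u' : ℝ → V → ℝ, ∀ᵐ t ∂(volume : Measure ℝ), 0 < t →
      HasDerivAt u (u' t) t ∧ (fun v => -(u' t v)) ∈ subdiffJ E (u t)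

/-- The set `B_{1,u}` of edge functions adapted to `u`. -/
def B1u {V : Type*} (E : Finset (V × V)) (u : V → ℝ) : Set (V × V → ℝ) :=
  {H | ∀ e ∈ E,
    (u e.1 < u e.2 → H e = 1) ∧
    (u e.1 > u e.2 → H e = -1) ∧
    (u e.1 = u e.2 → H e ∈ Set.Icc (-1 : ℝ) 1)}

/-!
`J` is sublinear, so `u* ∈ ∂J(u)` exactly when `⟨g, u*⟩ ≤ J(g)` for all `g` and
`⟨u, u*⟩ = J(u)`. Since `⟨g, div H⟩ = ∑_{e ∈ E} H(e) (g(e.2) - g(e.1))`, the function `J` is the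
support function of the image under `div` of the sup-norm unit ball of edge functions, attained at the
signs of the edge differences of `g`. That image is compact and convex, so Hahn–Banach turns the
first condition into `u* = div H` with `|H| ≤ 1`; the second then forces `H(e)` to be the sign of
`u(e.2) - u(e.1)` on every edge where it is nonzero, i.e. `H ∈ B_{1,u}`.
-/

lemma mul_le_abs_of_abs_le_one {a d : ℝ} (ha : |a| ≤ 1) : a * d ≤ |d| :=
  (le_abs_self _).trans <| by rw [abs_mul]; exact mul_le_of_le_one_left (abs_nonneg d) ha

lemma abs_le_one_and_mul_eq_abs_iff {a d : ℝ} :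
    |a| ≤ 1 ∧ a * d = |d| ↔
      (0 < d → a = 1) ∧ (d < 0 → a = -1) ∧ (d = 0 → a ∈ Set.Icc (-1) 1) := by
  rcases lt_trichotomy d 0 with hd | rfl | hd
  · simp only [hd, hd.ne, hd.not_gt, abs_of_neg hd, false_implies, true_implies, true_and,
      and_true]
    refine ⟨fun h => mul_right_cancel₀ hd.ne (by linarith [h.2]), ?_⟩
    rintro rfl
    simp
  · simp [abs_le]
  · simp only [hd, hd.ne', hd.not_gt, abs_of_pos hd, false_implies, true_implies, and_true]
    refine ⟨fun h => mul_right_cancel₀ hd.ne' (by linarith [h.2]), ?_⟩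
    rintro rfl
    simp

section

variable {V : Type*}

lemma mem_B1u_iff {E : Finset (V × V)} {u : V → ℝ} {H : V × V → ℝ} :
    H ∈ B1u E u ↔ ∀ e ∈ E, |H e| ≤ 1 ∧ H e * (u e.2 - u e.1) = |u e.2 - u e.1| := by
  refine forall₂_congr fun e _ => ?_
  rw [abs_le_one_and_mul_eq_abs_iff, sub_pos, sub_neg, sub_eq_zero, @eq_comm _ (u e.2)]

lemma tvJ_add_le (E : Finset (V × V)) (u g : V → ℝ) : tvJ E (u + g) ≤ tvJ E u + tvJ E g := by
  rw [tvJ, tvJ, tvJ, ← Finset.sum_add_distrib]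
  refine Finset.sum_le_sum fun e _ => ?_
  simpa only [Pi.add_apply, add_sub_add_comm] using abs_add_le _ _

@[simp]
lemma tvJ_zero (E : Finset (V × V)) : tvJ E 0 = 0 := by
  simp [tvJ]

lemma sum_mul_sub_le_tvJ {E : Finset (V × V)} {H : V × V → ℝ} (hH : ∀ e ∈ E, |H e| ≤ 1)
    (g : V → ℝ) : ∑ e ∈ E, H e * (g e.2 - g e.1) ≤ tvJ E g :=
  Finset.sum_le_sum fun e he => mul_le_abs_of_abs_le_one (hH e he)

variable [Fintype V]

lemma sum_mul_le_tvJ_of_mem_subdiffJ {E : Finset (V × V)} {u us : V → ℝ}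
    (hus : us ∈ subdiffJ E u) (g : V → ℝ) : ∑ v, g v * us v ≤ tvJ E g := by
  have := hus (u + g)
  simp only [Pi.add_apply, add_sub_cancel_left] at this
  linarith [tvJ_add_le E u g]

lemma sum_mul_eq_tvJ_of_mem_subdiffJ {E : Finset (V × V)} {u us : V → ℝ}
    (hus : us ∈ subdiffJ E u) : ∑ v, u v * us v = tvJ E u := by
  have := hus 0
  simp only [Pi.zero_apply, zero_sub, neg_mul, Finset.sum_neg_distrib, tvJ_zero] at this
  linarith [sum_mul_le_tvJ_of_mem_subdiffJ hus u]

variable [DecidableEq V]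

lemma sum_mul_gdiv (E : Finset (V × V)) (H : V × V → ℝ) (g : V → ℝ) :
    ∑ v, g v * gdiv E H v = ∑ e ∈ E, H e * (g e.2 - g e.1) := by
  simp only [gdiv, mul_sub, Finset.mul_sum, mul_ite, mul_zero, Finset.sum_sub_distrib]
  rw [Finset.sum_comm, Finset.sum_comm (s := Finset.univ)]
  simp [mul_comm]

def gdivₗ (E : Finset (V × V)) : (V × V → ℝ) →ₗ[ℝ] V → ℝ where
  toFun := gdiv E
  map_add' H K := by
    ext v
    simp only [gdiv, ← Finset.sum_filter, Pi.add_apply, Finset.sum_add_distrib]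
    ring
  map_smul' c H := by
    ext v
    simp only [gdiv, ← Finset.sum_filter, Pi.smul_apply, smul_eq_mul, ← Finset.mul_sum,
      RingHom.id_apply]
    ring

lemma mem_gdiv_image_closedBall_of_sum_mul_le_tvJ {E : Finset (V × V)} {us : V → ℝ}
    (hus : ∀ g : V → ℝ, ∑ v, g v * us v ≤ tvJ E g) :
    us ∈ gdiv E '' Metric.closedBall 0 1 := by
  have hconv : Convex ℝ (gdiv E '' Metric.closedBall 0 1) :=
    (convex_closedBall 0 1).linear_image (gdivₗ E)
  have hclosed : IsClosed (gdiv E '' Metric.closedBall 0 1) :=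
    ((isCompact_closedBall 0 1).image (gdivₗ E).continuous_of_finiteDimensional).isClosed
  by_contra hnot
  obtain ⟨f, c, hf_lt, hlt_f⟩ := geometric_hahn_banach_closed_point hconv hclosed hnot
  set g : V → ℝ := fun v => f fun w => if v = w then 1 else 0
  have hf : ∀ x, f x = ∑ v, g v * x v := fun x => by
    rw [← f.coe_coe, LinearMap.pi_apply_eq_sum_univ]
    simp [g, mul_comm]
  set H : V × V → ℝ := fun e => SignType.sign (g e.2 - g e.1)
  have hH : H ∈ Metric.closedBall 0 1 := by
    refine mem_closedBall_zero_iff.2 <| (pi_norm_le_iff_of_nonneg zero_le_one).2 fun e => ?_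
    simp only [H, Real.norm_eq_abs]
    rcases SignType.sign (g e.2 - g e.1) with _ | _ | _ <;> simp
  have hfH : f (gdiv E H) = tvJ E g := by
    rw [hf, sum_mul_gdiv]
    exact Finset.sum_congr rfl fun e _ => sign_mul_self _
  linarith [hf_lt _ ⟨H, hH, rfl⟩, hus g, hf us]

lemma mem_gdiv_image_B1u_of_mem_subdiffJ {E : Finset (V × V)} {u us : V → ℝ}
    (hus : us ∈ subdiffJ E u) : us ∈ gdiv E '' B1u E u := by
  obtain ⟨H, hH, rfl⟩ :=
    mem_gdiv_image_closedBall_of_sum_mul_le_tvJ (sum_mul_le_tvJ_of_mem_subdiffJ hus)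
  have hH1 : ∀ e, |H e| ≤ 1 :=
    (pi_norm_le_iff_of_nonneg zero_le_one).1 (mem_closedBall_zero_iff.1 hH)
  have hsum : ∑ e ∈ E, H e * (u e.2 - u e.1) = ∑ e ∈ E, |u e.2 - u e.1| := by
    rw [← sum_mul_gdiv]
    exact sum_mul_eq_tvJ_of_mem_subdiffJ hus
  have hterm := (Finset.sum_eq_sum_iff_of_le fun e _ => mul_le_abs_of_abs_le_one (hH1 e)).1 hsum
  exact ⟨H, mem_B1u_iff.2 fun e he => ⟨hH1 e, hterm e he⟩, rfl⟩

lemma gdiv_mem_subdiffJ {E : Finset (V × V)} {u : V → ℝ} {H : V × V → ℝ}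
    (hH : H ∈ B1u E u) : gdiv E H ∈ subdiffJ E u := by
  rw [mem_B1u_iff] at hH
  intro h
  have hu : ∑ e ∈ E, H e * (u e.2 - u e.1) = tvJ E u :=
    Finset.sum_congr rfl fun e he => (hH e he).2
  have hh := sum_mul_sub_le_tvJ (fun e he => (hH e he).1) h
  simp only [sub_mul, Finset.sum_sub_distrib, sum_mul_gdiv]
  linarith

end

theorem subdiff_eq_div_B1u_general
    {V : Type*} [Fintype V] [DecidableEq V] (E : Finset (V × V))
    (u : V → ℝ) :
    subdiffJ E u = gdiv E '' B1u E u := by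
  ext us
  refine ⟨mem_gdiv_image_B1u_of_mem_subdiffJ, ?_⟩
  rintro ⟨H, hH, rfl⟩
  exact gdiv_mem_subdiffJ hH

/-- `∂J(u) = div(B_{1,u})`. -/
theorem subdiff_eq_div_B1u
    {V : Type*} [Fintype V] [DecidableEq V] [Nonempty V] (E : Finset (V × V))
    (hE : ∀ v w : V, (v, w) ∈ E → (w, v) ∉ E)
    (hconn : (SimpleGraph.fromRel (fun v w : V => (v, w) ∈ E)).Connected)
    (u : V → ℝ) :
    subdiffJ E u = gdiv E '' B1u E u :=
  subdiff_eq_div_B1u_general E u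
end
end

section
/- Let 0 ≤ β₁ < β₂ and suppose the ROF minimizers satisfy ∂J(u_{β₁}) = ∂J(u_{β₂}). Then for every α with β₁ < α < β₂, the ROF minimizer u_α is the convex combination u_α = ((β₂ − α)/(β₂ − β₁)) u_{β₁} + ((α − β₁)/(β₂ − β₁)) u_{β₂}. -/
open Finset MeasureTheory

noncomputable section

/-!
The Euler–Lagrange condition for the ROF problem reads `f - u_β = β p` with `p ∈ ∂J(u_β)`.
Write `K = ∂J(u_{β₁}) = ∂J(u_{β₂})` and `w = a u_{β₁} + b u_{β₂}` with the weights of the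
statement. Then `f - w = a β₁ p₁ + b β₂ p₂ = α q`, where `q` is a convex combination of
`p₁, p₂ ∈ K`, hence `q ∈ K` because subdifferentials are convex. By convexity of `J`, a common
subgradient at two points is a subgradient on the whole segment between them, so `q ∈ ∂J(w)`,
i.e. `w` satisfies the optimality condition for `α`. Monotonicity of `∂J` makes the solution of
`f - u ∈ α ∂J(u)` unique, so `w = u_α`. For `β₁ = 0` we have `u_{β₁} = f`, and any `p₁ ∈ K`
works; `K` is nonempty since `∂J(u)` always contains the divergence of the edge signs of `u`.
-/

open Filter Topology

section

variable {V : Type*} {E : Finset (V × V)}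

lemma convexOn_tvJ (E : Finset (V × V)) : ConvexOn ℝ Set.univ (tvJ E) := by
  refine ⟨convex_univ, fun u _ w _ a b ha hb _ => ?_⟩
  simp only [tvJ, smul_eq_mul, Finset.mul_sum, ← Finset.sum_add_distrib]
  refine Finset.sum_le_sum fun e _ => ?_
  calc |(a • u + b • w) e.2 - (a • u + b • w) e.1|
      = |a * (u e.2 - u e.1) + b * (w e.2 - w e.1)| := by
        simp only [Pi.add_apply, Pi.smul_apply, smul_eq_mul]; ring_nf
    _ ≤ |a * (u e.2 - u e.1)| + |b * (w e.2 - w e.1)| := abs_add_le _ _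
    _ = a * |u e.2 - u e.1| + b * |w e.2 - w e.1| := by
        rw [abs_mul, abs_mul, abs_of_nonneg ha, abs_of_nonneg hb]

variable [Fintype V]

lemma mem_subdiffJ_iff {u p : V → ℝ} :
    p ∈ subdiffJ E u ↔ ∀ h, (h - u) ⬝ᵥ p + tvJ E u ≤ tvJ E h :=
  Iff.rfl

lemma sum_sq_sub_eq_dotProduct (f u : V → ℝ) :
    ∑ v, (f v - u v) ^ 2 = (f - u) ⬝ᵥ (f - u) := by
  simp only [dotProduct, Pi.sub_apply, sq]

lemma dotProduct_gdiv [DecidableEq V] (h : V → ℝ) (H : V × V → ℝ) :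
    h ⬝ᵥ gdiv E H = ∑ e ∈ E, H e * (h e.2 - h e.1) := by
  simp only [dotProduct, gdiv, mul_sub, Finset.mul_sum, mul_ite, mul_zero]
  rw [Finset.sum_sub_distrib, Finset.sum_comm, Finset.sum_comm (s := Finset.univ),
    ← Finset.sum_sub_distrib]
  refine Finset.sum_congr rfl fun e _ => ?_
  simp only [Finset.sum_ite_eq, Finset.mem_univ, if_true]
  ring

lemma gdiv_sign_mem_subdiffJ [DecidableEq V] (u : V → ℝ) :
    gdiv E (fun e => (SignType.sign (u e.2 - u e.1) : ℝ)) ∈ subdiffJ E u := by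
  refine mem_subdiffJ_iff.2 fun h => ?_
  rw [dotProduct_gdiv]
  simp only [tvJ, ← Finset.sum_add_distrib]
  refine Finset.sum_le_sum fun e _ => ?_
  have hsign := sign_mul_self (u e.2 - u e.1)
  calc (SignType.sign (u e.2 - u e.1) : ℝ) * ((h - u) e.2 - (h - u) e.1) + |u e.2 - u e.1|
      = (SignType.sign (u e.2 - u e.1) : ℝ) * (h e.2 - h e.1) := by
        simp only [Pi.sub_apply]; linear_combination -hsign
    _ ≤ |h e.2 - h e.1| := by
        cases SignType.sign (u e.2 - u e.1) <;> simp <;>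
          linarith [le_abs_self (h e.2 - h e.1), neg_abs_le (h e.2 - h e.1)]

lemma subdiffJ_nonempty (E : Finset (V × V)) (u : V → ℝ) : (subdiffJ E u).Nonempty := by
  classical
  exact ⟨_, gdiv_sign_mem_subdiffJ u⟩

lemma convex_subdiffJ (E : Finset (V × V)) (u : V → ℝ) : Convex ℝ (subdiffJ E u) := by
  intro p hp q hq a b ha hb hab
  refine mem_subdiffJ_iff.2 fun h => ?_
  have hp' := mem_subdiffJ_iff.1 hp h
  have hq' := mem_subdiffJ_iff.1 hq h
  rw [dotProduct_add, dotProduct_smul, dotProduct_smul, smul_eq_mul, smul_eq_mul]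
  linear_combination a * hp' + b * hq' + (tvJ E h - tvJ E u) * hab

lemma mem_subdiffJ_smul_add_smul {u w p : V → ℝ} (hu : p ∈ subdiffJ E u) (hw : p ∈ subdiffJ E w)
    {a b : ℝ} (ha : 0 ≤ a) (hb : 0 ≤ b) (hab : a + b = 1) : p ∈ subdiffJ E (a • u + b • w) := by
  refine mem_subdiffJ_iff.2 fun h => ?_
  have hu' := mem_subdiffJ_iff.1 hu h
  have hw' := mem_subdiffJ_iff.1 hw h
  have hJ := (convexOn_tvJ E).2 (Set.mem_univ u) (Set.mem_univ w) ha hb hab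
  obtain rfl : b = 1 - a := by linarith
  have hsplit : h - (a • u + (1 - a) • w) = a • (h - u) + (1 - a) • (h - w) := by module
  rw [hsplit, add_dotProduct, smul_dotProduct, smul_dotProduct, smul_eq_mul, smul_eq_mul]
  rw [smul_eq_mul, smul_eq_mul] at hJ
  linear_combination a * hu' + (1 - a) * hw' + hJ

lemma sub_dotProduct_sub_nonneg_of_mem_subdiffJ {u w p q : V → ℝ} (hp : p ∈ subdiffJ E u)
    (hq : q ∈ subdiffJ E w) : 0 ≤ (u - w) ⬝ᵥ (p - q) := by
  have hpw := mem_subdiffJ_iff.1 hp w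
  have hqu := mem_subdiffJ_iff.1 hq u
  rw [← neg_sub u w, neg_dotProduct] at hpw
  rw [dotProduct_sub]
  linarith

lemma eq_of_sub_eq_smul_of_mem_subdiffJ {f u w p q : V → ℝ} {α : ℝ} (hα : 0 ≤ α)
    (hp : p ∈ subdiffJ E u) (hq : q ∈ subdiffJ E w) (hu : f - u = α • p) (hw : f - w = α • q) :
    u = w := by
  have huw : u - w = -(α • (p - q)) := by
    rw [smul_sub, ← hu, ← hw]; abel
  have hle : (u - w) ⬝ᵥ (u - w) ≤ 0 := by
    nth_rewrite 2 [huw]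
    rw [dotProduct_neg, dotProduct_smul, smul_eq_mul, neg_nonpos]
    exact mul_nonneg hα (sub_dotProduct_sub_nonneg_of_mem_subdiffJ hp hq)
  have hnonneg : 0 ≤ (u - w) ⬝ᵥ (u - w) := Finset.sum_nonneg fun v _ => mul_self_nonneg _
  exact sub_eq_zero.1 (dotProduct_self_eq_zero.1 (le_antisymm hle hnonneg))

namespace IsROFMinimizer

variable {f u : V → ℝ} {α : ℝ}

lemma eq_of_zero (hu : IsROFMinimizer E f 0 u) : u = f := by
  have hf := hu f
  rw [sum_sq_sub_eq_dotProduct, sum_sq_sub_eq_dotProduct, sub_self, zero_dotProduct] at hf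
  have hnonneg : 0 ≤ (f - u) ⬝ᵥ (f - u) := Finset.sum_nonneg fun v _ => mul_self_nonneg _
  exact (sub_eq_zero.1 (dotProduct_self_eq_zero.1 (by linarith))).symm

lemma sub_dotProduct_sub_le (hα : 0 ≤ α) (hu : IsROFMinimizer E f α u) (h : V → ℝ) :
    (h - u) ⬝ᵥ (f - u) ≤ α * (tvJ E h - tvJ E u) := by
  set A := (h - u) ⬝ᵥ (f - u)
  set S := (h - u) ⬝ᵥ (h - u)
  have hbound : ∀ t ∈ Set.Ioo (0 : ℝ) 1, A ≤ α * (tvJ E h - tvJ E u) + t * S / 2 := by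
    rintro t ⟨ht0, ht1⟩
    have hmin := hu (u + t • (h - u))
    have hJ : tvJ E (u + t • (h - u)) ≤ (1 - t) * tvJ E u + t * tvJ E h := by
      have := (convexOn_tvJ E).2 (Set.mem_univ u) (Set.mem_univ h) (sub_nonneg.2 ht1.le) ht0.le
        (sub_add_cancel 1 t)
      rwa [show u + t • (h - u) = (1 - t) • u + t • h by module]
    have hsq : ∀ x y : V → ℝ,
        (x - t • y) ⬝ᵥ (x - t • y) = x ⬝ᵥ x - 2 * t * (y ⬝ᵥ x) + t ^ 2 * (y ⬝ᵥ y) := by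
      intro x y
      simp only [sub_dotProduct, dotProduct_sub, smul_dotProduct, dotProduct_smul, smul_eq_mul,
        dotProduct_comm x y]
      ring
    rw [sum_sq_sub_eq_dotProduct, sum_sq_sub_eq_dotProduct,
      show f - (u + t • (h - u)) = (f - u) - t • (h - u) by abel, hsq] at hmin
    have : t * A ≤ t * (α * (tvJ E h - tvJ E u) + t * S / 2) := by
      nlinarith [mul_le_mul_of_nonneg_left hJ hα]
    exact le_of_mul_le_mul_left this ht0
  have hlim : Tendsto (fun t => α * (tvJ E h - tvJ E u) + t * S / 2) (𝓝[>] 0)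
      (𝓝 (α * (tvJ E h - tvJ E u))) := by
    have hcont : Continuous fun t : ℝ => α * (tvJ E h - tvJ E u) + t * S / 2 := by fun_prop
    simpa using (hcont.tendsto 0).mono_left nhdsWithin_le_nhds
  exact ge_of_tendsto hlim (eventually_of_mem (Ioo_mem_nhdsGT one_pos) hbound)

lemma exists_mem_subdiffJ_sub_eq_smul (hα : 0 ≤ α) (hu : IsROFMinimizer E f α u) :
    ∃ p ∈ subdiffJ E u, f - u = α • p := by
  rcases hα.eq_or_lt with rfl | hα
  · obtain ⟨p, hp⟩ := subdiffJ_nonempty E u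
    exact ⟨p, hp, by rw [hu.eq_of_zero, sub_self, zero_smul]⟩
  refine ⟨α⁻¹ • (f - u), mem_subdiffJ_iff.2 fun h => ?_, (smul_inv_smul₀ hα.ne' _).symm⟩
  have hineq : α⁻¹ * ((h - u) ⬝ᵥ (f - u)) ≤ tvJ E h - tvJ E u :=
    (inv_mul_le_iff₀ hα).2 (hu.sub_dotProduct_sub_le hα.le h)
  rw [dotProduct_smul, smul_eq_mul]
  linarith

end IsROFMinimizer

end

theorem rof_minimizer_convex_combination_general
    {V : Type*} [Fintype V] (E : Finset (V × V))
    (f : V → ℝ) (β₁ β₂ : ℝ) (hβ₁ : 0 ≤ β₁) (hβ : β₁ < β₂)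
    (u₁ u₂ : V → ℝ) (hu₁ : IsROFMinimizer E f β₁ u₁) (hu₂ : IsROFMinimizer E f β₂ u₂)
    (hsub : subdiffJ E u₁ = subdiffJ E u₂)
    (α : ℝ) (hα₁ : β₁ < α) (hα₂ : α < β₂)
    (uα : V → ℝ) (huα : IsROFMinimizer E f α uα) :
    uα = ((β₂ - α) / (β₂ - β₁)) • u₁ + ((α - β₁) / (β₂ - β₁)) • u₂ := by
  have hα : 0 < α := hβ₁.trans_lt hα₁
  have hδ : β₂ - β₁ ≠ 0 := (sub_pos.2 hβ).ne'
  set a := (β₂ - α) / (β₂ - β₁)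
  set b := (α - β₁) / (β₂ - β₁)
  have ha : 0 ≤ a := div_nonneg (sub_nonneg.2 hα₂.le) (sub_nonneg.2 hβ.le)
  have hb : 0 ≤ b := div_nonneg (sub_nonneg.2 hα₁.le) (sub_nonneg.2 hβ.le)
  have hab : a + b = 1 := by rw [← add_div, div_eq_one_iff_eq hδ]; ring
  have hmean : a * β₁ + b * β₂ = α := by
    rw [div_mul_eq_mul_div, div_mul_eq_mul_div, ← add_div, div_eq_iff hδ]; ring
  obtain ⟨p₁, hp₁, hf₁⟩ := hu₁.exists_mem_subdiffJ_sub_eq_smul hβ₁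
  obtain ⟨p₂, hp₂, hf₂⟩ := hu₂.exists_mem_subdiffJ_sub_eq_smul (hβ₁.trans hβ.le)
  obtain ⟨p, hp, hf⟩ := huα.exists_mem_subdiffJ_sub_eq_smul hα.le
  set q := (a * β₁ / α) • p₁ + (b * β₂ / α) • p₂
  have hq₁ : q ∈ subdiffJ E u₁ :=
    convex_subdiffJ E u₁ hp₁ (hsub ▸ hp₂) (div_nonneg (mul_nonneg ha hβ₁) hα.le)
      (div_nonneg (mul_nonneg hb (hβ₁.trans hβ.le)) hα.le)
      (by rw [← add_div, hmean, div_self hα.ne'])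
  have hq₂ : q ∈ subdiffJ E u₂ := hsub ▸ hq₁
  refine eq_of_sub_eq_smul_of_mem_subdiffJ hα.le hp
    (mem_subdiffJ_smul_add_smul hq₁ hq₂ ha hb hab) hf ?_
  calc f - (a • u₁ + b • u₂) = (a + b) • f - (a • u₁ + b • u₂) := by rw [hab, one_smul]
    _ = a • (f - u₁) + b • (f - u₂) := by module
    _ = α • q := by
        rw [hf₁, hf₂, smul_add, smul_smul, smul_smul, smul_smul, smul_smul,
          mul_div_cancel₀ _ hα.ne', mul_div_cancel₀ _ hα.ne']

/-- if `∂J(u_{β₁}) = ∂J(u_{β₂})` for `0 ≤ β₁ < β₂`, then for `β₁ < α < β₂`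
the ROF minimizer `u_α` is the corresponding convex combination of `u_{β₁}` and `u_{β₂}`. -/
theorem rof_minimizer_convex_combination
    {V : Type*} [Fintype V] [DecidableEq V] [Nonempty V] (E : Finset (V × V))
    (hE : ∀ v w : V, (v, w) ∈ E → (w, v) ∉ E)
    (hconn : (SimpleGraph.fromRel (fun v w : V => (v, w) ∈ E)).Connected)
    (f : V → ℝ) (β₁ β₂ : ℝ) (hβ₁ : 0 ≤ β₁) (hβ : β₁ < β₂)
    (u₁ u₂ : V → ℝ) (hu₁ : IsROFMinimizer E f β₁ u₁) (hu₂ : IsROFMinimizer E f β₂ u₂)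
    (hsub : subdiffJ E u₁ = subdiffJ E u₂)
    (α : ℝ) (hα₁ : β₁ < α) (hα₂ : α < β₂)
    (uα : V → ℝ) (huα : IsROFMinimizer E f α uα) :
    uα = ((β₂ - α) / (β₂ - β₁)) • u₁ + ((α - β₁) / (β₂ - β₁)) • u₂ :=
  rof_minimizer_convex_combination_general E f β₁ β₂ hβ₁ hβ u₁ u₂ hu₁ hu₂ hsub α hα₁ hα₂ uα huα
end
end

section
/- For every f ∈ ℝ^V there exists C ≥ 0 such that for all α ≥ C the ROF minimizer is the constant function equal to the mean of the datum: u_α(v) = (1/|V|) Σ_{w∈V} f(w) for every v ∈ V. -/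
/-!
The constant `c` equal to the mean of `f` has zero total variation, and `g = f - c` has sum
zero, so `⟨g, w⟩ = ⟨g, w - w v₀⟩ ≤ ‖g‖₁ · osc w ≤ ‖g‖₁ · |V| · J(w)`, the oscillation being
controlled along paths of the connected graph. Expanding `½‖f - w‖²` around `c` then gives
`E_α(w) ≥ E_α(c) + ½‖w - c‖²` as soon as `α ≥ |V| ‖g‖₁`, so every minimizer equals `c`.
-/

open Finset MeasureTheory

noncomputable section

section TotalVariation

variable {V : Type*} {E : Finset (V × V)}

abbrev edgeGraph (E : Finset (V × V)) : SimpleGraph V :=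
  SimpleGraph.fromRel fun v w => (v, w) ∈ E

lemma tvJ_nonneg (E : Finset (V × V)) (u : V → ℝ) : 0 ≤ tvJ E u :=
  sum_nonneg fun _ _ => abs_nonneg _

lemma tvJ_const (E : Finset (V × V)) (c : ℝ) : tvJ E (fun _ => c) = 0 := by
  simp [tvJ]

lemma abs_sub_le_tvJ_of_mem (u : V → ℝ) {v w : V} (h : (v, w) ∈ E) :
    |u w - u v| ≤ tvJ E u :=
  single_le_sum (f := fun e => |u e.2 - u e.1|) (fun _ _ => abs_nonneg _) h

lemma abs_sub_le_tvJ_of_adj (u : V → ℝ) {v w : V} (h : (edgeGraph E).Adj v w) :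
    |u v - u w| ≤ tvJ E u := by
  rcases ((SimpleGraph.fromRel_adj _ _ _).1 h).2 with h | h
  · rw [abs_sub_comm]
    exact abs_sub_le_tvJ_of_mem u h
  · exact abs_sub_le_tvJ_of_mem u h

lemma abs_sub_le_length_mul_tvJ (u : V → ℝ) {x y : V} (p : (edgeGraph E).Walk x y) :
    |u x - u y| ≤ p.length * tvJ E u := by
  induction p with
  | nil => simp
  | @cons a b c h p ih =>
    rw [SimpleGraph.Walk.length_cons, Nat.cast_succ]
    linarith [abs_sub_le_tvJ_of_adj u h, abs_sub_le (u a) (u b) (u c)]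

lemma abs_sub_le_card_mul_tvJ [Fintype V] (hconn : (edgeGraph E).Connected) (u : V → ℝ)
    (x y : V) : |u x - u y| ≤ Fintype.card V * tvJ E u := by
  obtain ⟨p, hp, -⟩ := hconn.exists_path_of_dist x y
  calc |u x - u y| ≤ p.length * tvJ E u := abs_sub_le_length_mul_tvJ u p
    _ ≤ Fintype.card V * tvJ E u := by
      gcongr
      · exact tvJ_nonneg E u
      · exact hp.length_lt.le

end TotalVariation

lemma sum_sub_mean_eq_zero {ι : Type*} [Fintype ι] [Nonempty ι] (f : ι → ℝ) :
    ∑ i, (f i - (1 / (Fintype.card ι : ℝ)) * ∑ j, f j) = 0 := by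
  have : (Fintype.card ι : ℝ) ≠ 0 := Nat.cast_ne_zero.2 Fintype.card_ne_zero
  simp [sum_sub_distrib, this]

lemma abs_sum_mul_le_of_sum_eq_zero {ι : Type*} [Fintype ι] {g w : ι → ℝ} {M : ℝ}
    (hg : ∑ i, g i = 0) (hw : ∀ i j, |w i - w j| ≤ M) :
    |∑ i, g i * w i| ≤ (∑ i, |g i|) * M := by
  rcases isEmpty_or_nonempty ι with hι | ⟨⟨j⟩⟩
  · simp
  have hshift : ∑ i, g i * w i = ∑ i, g i * (w i - w j) := by
    simp only [mul_sub, sum_sub_distrib, ← sum_mul, hg, zero_mul, sub_zero]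
  rw [hshift, sum_mul]
  refine (abs_sum_le_sum_abs _ _).trans (sum_le_sum fun i _ => ?_)
  rw [abs_mul]
  exact mul_le_mul_of_nonneg_left (hw i j) (abs_nonneg _)

section ROF

variable {V : Type*} [Fintype V] {E : Finset (V × V)}

def rofEnergy (E : Finset (V × V)) (f : V → ℝ) (α : ℝ) (u : V → ℝ) : ℝ :=
  (1 / 2) * (∑ v, (f v - u v) ^ 2) + α * tvJ E u

lemma isROFMinimizer_iff {f : V → ℝ} {α : ℝ} {u : V → ℝ} :
    IsROFMinimizer E f α u ↔ ∀ w, rofEnergy E f α u ≤ rofEnergy E f α w :=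
  Iff.rfl

lemma rofEnergy_const_add_le (hconn : (edgeGraph E).Connected) {f : V → ℝ} {c α : ℝ}
    (hc : ∑ v, (f v - c) = 0) (hα : Fintype.card V * ∑ v, |f v - c| ≤ α) (w : V → ℝ) :
    rofEnergy E f α (fun _ => c) + (1 / 2) * ∑ v, (w v - c) ^ 2 ≤ rofEnergy E f α w := by
  have hpair : |∑ v, (f v - c) * (w v - c)| ≤
      (∑ v, |f v - c|) * (Fintype.card V * tvJ E w) :=
    abs_sum_mul_le_of_sum_eq_zero hc fun x y => by
      simpa only [sub_sub_sub_cancel_right] using abs_sub_le_card_mul_tvJ hconn w x y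
  have hexpand : ∑ v, (f v - w v) ^ 2 =
      ∑ v, (f v - c) ^ 2 + ∑ v, (w v - c) ^ 2 - 2 * ∑ v, (f v - c) * (w v - c) := by
    rw [← sum_add_distrib, mul_sum, ← sum_sub_distrib]
    exact sum_congr rfl fun v _ => by ring
  have hαJ : Fintype.card V * (∑ v, |f v - c|) * tvJ E w ≤ α * tvJ E w :=
    mul_le_mul_of_nonneg_right hα (tvJ_nonneg E w)
  simp only [rofEnergy, tvJ_const, hexpand]
  linarith [(abs_le.1 hpair).2]

lemma IsROFMinimizer.eq_const (hconn : (edgeGraph E).Connected) {f u : V → ℝ} {c α : ℝ}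
    (hc : ∑ v, (f v - c) = 0) (hα : Fintype.card V * ∑ v, |f v - c| ≤ α)
    (hu : IsROFMinimizer E f α u) (v : V) : u v = c := by
  have hgrowth := rofEnergy_const_add_le hconn hc hα u
  have hsq : ∑ x, (u x - c) ^ 2 = 0 :=
    le_antisymm (by linarith [isROFMinimizer_iff.1 hu fun _ => c])
      (sum_nonneg fun _ _ => sq_nonneg _)
  have hv := (sum_eq_zero_iff_of_nonneg fun x _ => sq_nonneg (u x - c)).1 hsq v (mem_univ v)
  exact sub_eq_zero.1 (pow_eq_zero_iff two_ne_zero |>.1 hv)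

end ROF

theorem rof_minimizer_eventually_mean_general
    {V : Type*} [Fintype V] [Nonempty V] (E : Finset (V × V))
    (hconn : (SimpleGraph.fromRel (fun v w : V => (v, w) ∈ E)).Connected)
    (f : V → ℝ) :
    ∃ C : ℝ, 0 ≤ C ∧ ∀ α : ℝ, C ≤ α → ∀ uα : V → ℝ, IsROFMinimizer E f α uα →
      ∀ v : V, uα v = (1 / (Fintype.card V : ℝ)) * ∑ w, f w :=
  ⟨_, by positivity, fun _ hα _ hu => hu.eq_const hconn (sum_sub_mean_eq_zero f) hα⟩

/-- for large enough regularization parameter, the ROF minimizer is the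
constant function equal to the mean of the datum. -/
theorem rof_minimizer_eventually_mean
    {V : Type*} [Fintype V] [DecidableEq V] [Nonempty V] (E : Finset (V × V))
    (hE : ∀ v w : V, (v, w) ∈ E → (w, v) ∉ E)
    (hconn : (SimpleGraph.fromRel (fun v w : V => (v, w) ∈ E)).Connected)
    (f : V → ℝ) :
    ∃ C : ℝ, 0 ≤ C ∧ ∀ α : ℝ, C ≤ α → ∀ uα : V → ℝ, IsROFMinimizer E f α uα →
      ∀ v : V, uα v = (1 / (Fintype.card V : ℝ)) * ∑ w, f w :=
  rof_minimizer_eventually_mean_general E hconn f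
end
end
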